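/- Fix x̄ ∈ ℝ^N and r > 0, and consider on ℝ^N∖B_{H₀}(x̄,r) the function v_r(x) = (H₀(x−x̄)/r)^{1/q} with q = −(p−1)/(N−p). Then v_r is q-concave (i.e. (v_r)^q = H₀(x−x̄)/r is convex), but for every β with q < β ≤ 1 the function v_r is not β-concave. Hence the concavity exponent of the Wulff shape B_{H₀}(x̄,r) equals q. -/

import Mathlib

open Filter MeasureTheory Set Metric
open scoped Topology NNReal Pointwise

noncomputable section

/-- Euclidean space `ℝ^N`. -/
abbrev En (N : ℕ) : Type := EuclideanSpace ℝ (Fin N)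

/-- `H` is a norm on `ℝ^N`: convex, nonnegative, vanishing only at the origin,
and absolutely `1`-homogeneous. -/
structure IsNorm {N : ℕ} (H : En N → ℝ) : Prop where
  convex : ConvexOn ℝ Set.univ H
  nonneg : ∀ ξ, 0 ≤ H ξ
  eq_zero_iff : ∀ ξ, H ξ = 0 ↔ ξ = 0
  abs_smul : ∀ (t : ℝ) (ξ : En N), H (t • ξ) = |t| * H ξ

/-- The dual norm `H₀(x) = sup_{ξ ≠ 0} ⟨x, ξ⟩ / H(ξ)`. -/
def dualNorm {N : ℕ} (H : En N → ℝ) (x : En N) : ℝ :=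
  ⨆ ξ : {ξ : En N // ξ ≠ 0}, (inner ℝ x ξ.1 : ℝ) / H ξ.1

/-- The Wulff shape `B_{H₀}(x̄, r) = {x : H₀(x - x̄) < r}`. -/
def wulff {N : ℕ} (H : En N → ℝ) (xbar : En N) (r : ℝ) : Set (En N) :=
  {x | dualNorm H (x - xbar) < r}

/-- `u` is a weak solution of the Finsler `p`-Laplace equation `Δ_p^H u = 0` on the set `E`:
`∫_E H(∇u)^(p-1) ⟨∇H(∇u), ∇φ⟩ = 0` for every test function `φ` compactly supported in `E`. -/
def IsWeakSol {N : ℕ} (H : En N → ℝ) (p : ℝ) (u : En N → ℝ) (E : Set (En N)) : Prop :=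
  ∀ φ : En N → ℝ, ContDiff ℝ (⊤ : ℕ∞) φ → HasCompactSupport φ → tsupport φ ⊆ E →
    (∫ x in E, H (gradient u x) ^ (p - 1) * (inner ℝ (gradient H (gradient u x)) (gradient φ x) : ℝ)) = 0

/-- `u` is the Finsler `p`-capacitary potential of the set `K`: continuous on `ℝ^N ∖ K`,
`C¹` outside the closure, a weak solution of `Δ_p^H u = 0` outside the closure, `= 1` on the
boundary of `K`, and tending to `0` as `H₀(x) → ∞`. -/
def IsCapPotential {N : ℕ} (H : En N → ℝ) (p : ℝ) (K : Set (En N)) (u : En N → ℝ) : Prop :=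
  ContinuousOn u (interior K)ᶜ ∧ ContDiffOn ℝ 1 u (closure K)ᶜ ∧
  IsWeakSol H p u (closure K)ᶜ ∧ (∀ x ∈ frontier K, u x = 1) ∧
  Tendsto u (comap (dualNorm H) atTop) (𝓝 0)

/-- The regularity class `𝒥_p`: `H ∈ C²` away from the origin with positive definite Hessian of
`H²/2`, and `H^p ∈ C^{2,1}` away from the origin. -/
structure InJp {N : ℕ} (H : En N → ℝ) (p : ℝ) : Prop where
  c2 : ContDiffOn ℝ 2 H {(0 : En N)}ᶜ
  hess_pos : ∀ x : En N, x ≠ 0 → ∀ v : En N, v ≠ 0 →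
    0 < iteratedFDeriv ℝ 2 (fun y => H y ^ 2 / 2) x ![v, v]
  hp_c2 : ContDiffOn ℝ 2 (fun ξ => H ξ ^ p) {(0 : En N)}ᶜ
  hp_lip : ∀ x : En N, x ≠ 0 → ∃ ε > 0, ∃ L : NNReal,
    LipschitzOnWith L (iteratedFDeriv ℝ 2 (fun ξ => H ξ ^ p)) (ball x ε)

/-- `f` is convex on the (possibly non-convex) set `s`: the convexity inequality holds whenever
the convex combination of two points of `s` also lies in `s`. -/
def ConvexOnSet {N : ℕ} (s : Set (En N)) (f : En N → ℝ) : Prop :=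
  ∀ ⦃x⦄, x ∈ s → ∀ ⦃y⦄, y ∈ s → ∀ ⦃a b : ℝ⦄, 0 ≤ a → 0 ≤ b → a + b = 1 →
    a • x + b • y ∈ s → f (a • x + b • y) ≤ a * f x + b * f y

/-- `f` is concave on the (possibly non-convex) set `s`. -/
def ConcaveOnSet {N : ℕ} (s : Set (En N)) (f : En N → ℝ) : Prop :=
  ∀ ⦃x⦄, x ∈ s → ∀ ⦃y⦄, y ∈ s → ∀ ⦃a b : ℝ⦄, 0 ≤ a → 0 ≤ b → a + b = 1 →
    a • x + b • y ∈ s → a * f x + b * f y ≤ f (a • x + b • y)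

/-- `u` is `β`-concave on `s`: `u^β` convex for `β < 0`, `log u` concave for `β = 0`,
`u^β` concave for `β > 0`. -/
def AlphaConcaveOn {N : ℕ} (s : Set (En N)) (u : En N → ℝ) (β : ℝ) : Prop :=
  (β < 0 → ConvexOnSet s fun x => u x ^ β) ∧
  (β = 0 → ConcaveOnSet s fun x => Real.log (u x)) ∧
  (0 < β → ConcaveOnSet s fun x => u x ^ β)

/-- The concavity exponent `α = sup {β ≤ 1 : u is β-concave on s}`, as an extended real. -/
def concavityExponent {N : ℕ} (s : Set (En N)) (u : En N → ℝ) : EReal :=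
  sSup {β : EReal | ∃ b : ℝ, β = (b : EReal) ∧ b ≤ 1 ∧ AlphaConcaveOn s u b}

/-- `Ω` has boundary of class `C²`: it is the sublevel set of a `C²` defining function with
non-vanishing gradient on the boundary. -/
def C2Boundary {N : ℕ} (Ω : Set (En N)) : Prop :=
  ∃ f : En N → ℝ, ContDiff ℝ 2 f ∧ Ω = {x | f x < 0} ∧
    frontier Ω = {x | f x = 0} ∧ ∀ x ∈ frontier Ω, gradient f x ≠ 0

/-- `Ω` has boundary of class `C²` with strictly positive principal curvatures: additionally the
Hessian of the defining function is positive on tangent directions. -/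
def C2PlusBoundary {N : ℕ} (Ω : Set (En N)) : Prop :=
  ∃ f : En N → ℝ, ContDiff ℝ 2 f ∧ Ω = {x | f x < 0} ∧
    frontier Ω = {x | f x = 0} ∧ (∀ x ∈ frontier Ω, gradient f x ≠ 0) ∧
    ∀ x ∈ frontier Ω, ∀ v : En N, v ≠ 0 → (inner ℝ v (gradient f x) : ℝ) = 0 →
      0 < iteratedFDeriv ℝ 2 f x ![v, v]

/-- `Ω` has boundary of class `C^{2,α}`: a `C²` defining function with non-vanishing gradient on
the boundary whose second derivative is locally `α`-Hölder near the boundary. -/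
def C2HolderBoundary {N : ℕ} (Ω : Set (En N)) : Prop :=
  ∃ f : En N → ℝ, ∃ a : NNReal, 0 < a ∧ a ≤ 1 ∧ ContDiff ℝ 2 f ∧ Ω = {x | f x < 0} ∧
    frontier Ω = {x | f x = 0} ∧ (∀ x ∈ frontier Ω, gradient f x ≠ 0) ∧
    ∀ x ∈ frontier Ω, ∃ ε > 0, ∃ Cst : NNReal,
      HolderOnWith Cst a (iteratedFDeriv ℝ 2 f) (ball x ε)

/-- The Finsler `p`-capacity
`Cap_{H,p}(K) = inf {(1/p) ∫ H(∇φ)^p : φ ∈ C_c^∞(ℝ^N), φ ≥ 1 on K}`. -/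
def finslerCapacity {N : ℕ} (H : En N → ℝ) (p : ℝ) (K : Set (En N)) : ℝ :=
  sInf {c : ℝ | ∃ φ : En N → ℝ, ContDiff ℝ (⊤ : ℕ∞) φ ∧ HasCompactSupport φ ∧
    (∀ x ∈ K, 1 ≤ φ x) ∧ c = (1 / p) * ∫ x, H (gradient φ x) ^ p}

/-! The dual norm `H₀` is a supremum of linear functionals `x ↦ ⟨x, ξ⟩ / H ξ`, bounded because
`H` dominates a multiple of the Euclidean norm; hence `H₀` is convex and positively homogeneous.
So `v_r ^ q = H₀(· - x̄) / r` is convex, while along a ray from `x̄` the function `v_r` is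
`t ↦ t ^ (1 / q)`, whose `β`-th power `t ^ (β / q)` fails the required convexity (`β < 0`) or
concavity (`β > 0`) strictly, as does `log` for `β = 0`; midpoint tests at `t = 1, 2, 3` suffice. -/

section DualNorm

variable {N : ℕ} {H : En N → ℝ}

theorem IsNorm.pos (hH : IsNorm H) {ξ : En N} (hξ : ξ ≠ 0) : 0 < H ξ :=
  (hH.nonneg ξ).lt_of_ne' fun h => hξ ((hH.eq_zero_iff ξ).mp h)

theorem IsNorm.exists_pos_mul_norm_le (hH : IsNorm H) : ∃ c > 0, ∀ ξ, c * ‖ξ‖ ≤ H ξ := by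
  have hcont : ContinuousOn H (sphere 0 1) :=
    (hH.convex.continuousOn isOpen_univ).mono (subset_univ _)
  obtain ⟨c, hc, hcH⟩ := (isCompact_sphere (0 : En N) 1).exists_forall_le' hcont
    fun ξ hξ => hH.pos (ne_zero_of_mem_unit_sphere ⟨ξ, hξ⟩)
  refine ⟨c, hc, fun ξ => ?_⟩
  rcases eq_or_ne ξ 0 with rfl | hξ
  · simp [(hH.eq_zero_iff 0).mpr rfl]
  have hn : 0 < ‖ξ‖ := norm_pos_iff.mpr hξ
  have hunit : ‖ξ‖⁻¹ • ξ ∈ sphere (0 : En N) 1 := by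
    simp [norm_smul, hn.ne']
  calc c * ‖ξ‖ ≤ H (‖ξ‖⁻¹ • ξ) * ‖ξ‖ := by gcongr; exact hcH _ hunit
    _ = H ξ := by rw [hH.abs_smul, abs_of_pos (inv_pos.mpr hn)]; field_simp

theorem IsNorm.bddAbove_range_inner_div (hH : IsNorm H) (x : En N) :
    BddAbove (range fun ξ : {ξ : En N // ξ ≠ 0} => (inner ℝ x ξ.1 : ℝ) / H ξ.1) := by
  obtain ⟨c, hc, hcH⟩ := hH.exists_pos_mul_norm_le
  refine ⟨‖x‖ / c, forall_mem_range.mpr fun ⟨ξ, hξ⟩ => ?_⟩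
  have hn : 0 < ‖ξ‖ := norm_pos_iff.mpr hξ
  calc (inner ℝ x ξ : ℝ) / H ξ ≤ ‖x‖ * ‖ξ‖ / H ξ :=
        div_le_div_of_nonneg_right (real_inner_le_norm x ξ) (hH.nonneg ξ)
    _ ≤ ‖x‖ * ‖ξ‖ / (c * ‖ξ‖) := by gcongr; exact hcH ξ
    _ = ‖x‖ / c := by field_simp

theorem IsNorm.inner_div_le_dualNorm (hH : IsNorm H) (x : En N) {ξ : En N} (hξ : ξ ≠ 0) :
    (inner ℝ x ξ : ℝ) / H ξ ≤ dualNorm H x :=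
  le_ciSup (hH.bddAbove_range_inner_div x) ⟨ξ, hξ⟩

theorem IsNorm.dualNorm_pos (hH : IsNorm H) {x : En N} (hx : x ≠ 0) : 0 < dualNorm H x := by
  have hxx : 0 < (inner ℝ x x : ℝ) := real_inner_self_pos.mpr hx
  exact (div_pos hxx (hH.pos hx)).trans_le (hH.inner_div_le_dualNorm x hx)

theorem dualNorm_smul_of_nonneg {t : ℝ} (ht : 0 ≤ t) (x : En N) :
    dualNorm H (t • x) = t * dualNorm H x := by
  simp only [dualNorm, Real.mul_iSup_of_nonneg ht, real_inner_smul_left, mul_div_assoc]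

theorem IsNorm.dualNorm_add_le [Nontrivial (En N)] (hH : IsNorm H) (x y : En N) :
    dualNorm H (x + y) ≤ dualNorm H x + dualNorm H y := by
  obtain ⟨ξ, hξ⟩ := exists_ne (0 : En N)
  have : Nonempty {ξ : En N // ξ ≠ 0} := ⟨⟨ξ, hξ⟩⟩
  refine ciSup_le fun ξ => ?_
  rw [inner_add_left, add_div]
  exact add_le_add (hH.inner_div_le_dualNorm x ξ.2) (hH.inner_div_le_dualNorm y ξ.2)

theorem IsNorm.convexOn_dualNorm [Nontrivial (En N)] (hH : IsNorm H) :
    ConvexOn ℝ univ (dualNorm H) :=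
  ⟨convex_univ, fun x _ y _ a b ha hb _ => by
    simpa only [dualNorm_smul_of_nonneg ha, dualNorm_smul_of_nonneg hb, smul_eq_mul]
      using hH.dualNorm_add_le (a • x) (b • y)⟩

theorem IsNorm.convexOn_dualNorm_sub_div [Nontrivial (En N)] (hH : IsNorm H) (xbar : En N)
    {r : ℝ} (hr : 0 ≤ r) : ConvexOn ℝ univ fun x => dualNorm H (x - xbar) / r := by
  simpa [Function.comp_def, sub_eq_neg_add, div_eq_inv_mul] using
    (hH.convexOn_dualNorm.translate_right (-xbar)).smul (inv_nonneg.mpr hr)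

theorem IsNorm.exists_dualNorm_eq_one [Nontrivial (En N)] (hH : IsNorm H) :
    ∃ e : En N, dualNorm H e = 1 := by
  obtain ⟨e, he⟩ := exists_ne (0 : En N)
  have hpos := hH.dualNorm_pos he
  exact ⟨(dualNorm H e)⁻¹ • e, by
    rw [dualNorm_smul_of_nonneg (inv_nonneg.mpr hpos.le), inv_mul_cancel₀ hpos.ne']⟩

end DualNorm

section AlphaConcavity

variable {N : ℕ} {s : Set (En N)} {g : En N → ℝ} {q β : ℝ}

theorem ConvexOn.convexOnSet {f : En N → ℝ} (hf : ConvexOn ℝ univ f) (s : Set (En N)) :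
    ConvexOnSet s f :=
  fun _ _ _ _ _ _ ha hb hab _ => hf.2 trivial trivial ha hb hab

theorem alphaConcaveOn_rpow_one_div (hq : q < 0) (hg₀ : ∀ x ∈ s, 0 ≤ g x)
    (hg : ConvexOnSet s g) : AlphaConcaveOn s (fun x => g x ^ (1 / q)) q := by
  refine ⟨fun _ x hx y hy a b ha hb hab hxy => ?_, fun h => absurd h hq.ne,
    fun h => absurd h hq.not_gt⟩
  simp only [one_div, Real.rpow_inv_rpow (hg₀ _ _) hq.ne, hx, hy, hxy]
  exact hg hx hy ha hb hab hxy

theorem one_add_three_rpow_lt_two_mul_two_rpow {γ : ℝ} (h₀ : 0 < γ) (h₁ : γ < 1) :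
    1 + (3 : ℝ) ^ γ < 2 * 2 ^ γ := by
  have := (Real.strictConcaveOn_rpow h₀ h₁).2 (x := 1) (y := 3) (by norm_num) (by norm_num)
    (by norm_num) (by norm_num : (0 : ℝ) < 1 / 2) (by norm_num : (0 : ℝ) < 1 / 2) (by norm_num)
  norm_num at this
  linarith

theorem log_three_lt_two_mul_log_two : Real.log 3 < 2 * Real.log 2 := by
  rw [← Real.log_rpow two_pos]
  exact Real.log_lt_log (by norm_num) (by norm_num)

/-- AM-GM gives `1 + 3 ^ γ ≥ 2 * 3 ^ (γ / 2)`, and `3 ^ (γ / 2) > 4 ^ (γ / 2) = 2 ^ γ`. -/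
theorem two_mul_two_rpow_lt_one_add_three_rpow {γ : ℝ} (hγ : γ < 0) :
    2 * (2 : ℝ) ^ γ < 1 + 3 ^ γ := by
  have h43 : (4 : ℝ) ^ (γ / 2) < 3 ^ (γ / 2) :=
    Real.rpow_lt_rpow_of_neg (by norm_num) (by norm_num) (by linarith)
  have h4 : (4 : ℝ) ^ (γ / 2) = 2 ^ γ := by
    rw [show (4 : ℝ) = 2 ^ (2 : ℝ) by norm_num, ← Real.rpow_mul (by norm_num)]
    ring_nf
  have h3 : (3 : ℝ) ^ (γ / 2) * 3 ^ (γ / 2) = 3 ^ γ := by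
    rw [← Real.rpow_add (by norm_num)]
    ring_nf
  nlinarith [sq_nonneg (1 - (3 : ℝ) ^ (γ / 2))]

theorem not_alphaConcaveOn_rpow_one_div (hq : q < 0) (hqβ : q < β) {x y : En N}
    (hx : x ∈ s) (hy : y ∈ s) (hxy : (1 / 2 : ℝ) • x + (1 / 2 : ℝ) • y ∈ s)
    (hgx : g x = 1) (hgy : g y = 3) (hgxy : g ((1 / 2 : ℝ) • x + (1 / 2 : ℝ) • y) = 2) :
    ¬ AlphaConcaveOn s (fun z => g z ^ (1 / q)) β := by
  rintro ⟨hneg, hzero, hpos⟩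
  have hq' : 1 / q < 0 := one_div_neg.mpr hq
  have half : (1 / 2 : ℝ) + 1 / 2 = 1 := add_halves 1
  rcases lt_trichotomy β 0 with hβ | rfl | hβ
  · have h := hneg hβ hx hy (by norm_num) (by norm_num) half hxy
    simp only [hgx, hgy, hgxy, Real.one_rpow, ← Real.rpow_mul (by norm_num : (0 : ℝ) ≤ 2),
      ← Real.rpow_mul (by norm_num : (0 : ℝ) ≤ 3)] at h
    have hγ₁ : 1 / q * β < 1 := by
      rwa [div_mul_eq_mul_div, one_mul, div_lt_one_of_neg hq]
    linarith [one_add_three_rpow_lt_two_mul_two_rpow (mul_pos_of_neg_of_neg hq' hβ) hγ₁]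
  · have h := hzero rfl hx hy (by norm_num) (by norm_num) half hxy
    simp only [hgx, hgy, hgxy, Real.log_rpow (by norm_num : (0 : ℝ) < 2),
      Real.log_rpow (by norm_num : (0 : ℝ) < 3), Real.one_rpow, Real.log_one] at h
    nlinarith [log_three_lt_two_mul_log_two]
  · have h := hpos hβ hx hy (by norm_num) (by norm_num) half hxy
    simp only [hgx, hgy, hgxy, Real.one_rpow, ← Real.rpow_mul (by norm_num : (0 : ℝ) ≤ 2),
      ← Real.rpow_mul (by norm_num : (0 : ℝ) ≤ 3)] at h
    linarith [two_mul_two_rpow_lt_one_add_three_rpow (mul_neg_of_neg_of_pos hq' hβ)]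

theorem concavityExponent_eq {u : En N → ℝ} (hq : q ≤ 1) (hu : AlphaConcaveOn s u q)
    (hnot : ∀ β : ℝ, q < β → β ≤ 1 → ¬ AlphaConcaveOn s u β) :
    concavityExponent s u = q := by
  refine IsGreatest.csSup_eq ⟨⟨q, rfl, hq, hu⟩, ?_⟩
  rintro _ ⟨b, rfl, hb, hbu⟩
  exact EReal.coe_le_coe_iff.mpr (not_lt.mp fun h => hnot b h hb hbu)

end AlphaConcavity

/-- The potential `v_r(x) = (H₀(x-x̄)/r)^(1/q)` of the Wulff shape is
`q`-concave on `ℝ^N ∖ B_{H₀}(x̄,r)` but not `β`-concave for any `q < β ≤ 1`; hence the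
concavity exponent of the Wulff shape equals `q = -(p-1)/(N-p)`. -/
theorem concavityExponent_of_wulff
    {N : ℕ} (hN : 3 ≤ N) {p : ℝ} (hp1 : 1 < p) (hpN : p < N)
    {H : En N → ℝ} (hH : IsNorm H)
    (xbar : En N) {r : ℝ} (hr : 0 < r)
    {q : ℝ} (hq : q = -(p - 1) / (N - p)) :
    AlphaConcaveOn (wulff H xbar r)ᶜ (fun x => (dualNorm H (x - xbar) / r) ^ (1 / q)) q ∧
    (∀ β : ℝ, q < β → β ≤ 1 →
      ¬ AlphaConcaveOn (wulff H xbar r)ᶜ (fun x => (dualNorm H (x - xbar) / r) ^ (1 / q)) β) ∧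
    concavityExponent (wulff H xbar r)ᶜ (fun x => (dualNorm H (x - xbar) / r) ^ (1 / q))
      = (q : EReal) := by
  have hq₀ : q < 0 := hq ▸ div_neg_of_neg_of_pos (by linarith) (by linarith)
  have : Nonempty (Fin N) := ⟨⟨0, by omega⟩⟩
  set g : En N → ℝ := fun x => dualNorm H (x - xbar) / r
  have hmem : ∀ x, x ∈ (wulff H xbar r)ᶜ ↔ 1 ≤ g x := fun x => by
    simp [g, wulff, le_div_iff₀ hr]
  obtain ⟨e, he⟩ := hH.exists_dualNorm_eq_one
  have hray : ∀ t : ℝ, 1 ≤ t →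
      xbar + (t * r) • e ∈ (wulff H xbar r)ᶜ ∧ g (xbar + (t * r) • e) = t := by
    intro t ht
    have hgt : g (xbar + (t * r) • e) = t := by
      simp [g, dualNorm_smul_of_nonneg (by positivity : 0 ≤ t * r), he, hr.ne']
    exact ⟨(hmem _).mpr (hgt.symm ▸ ht), hgt⟩
  have hmid : (1 / 2 : ℝ) • (xbar + (1 * r) • e) + (1 / 2 : ℝ) • (xbar + (3 * r) • e)
      = xbar + (2 * r) • e := by module
  obtain ⟨h₁, hg₁⟩ := hray 1 le_rfl
  obtain ⟨h₂, hg₂⟩ := hray 2 one_le_two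
  obtain ⟨h₃, hg₃⟩ := hray 3 (by norm_num)
  rw [← hmid] at h₂ hg₂
  have hconc := alphaConcaveOn_rpow_one_div hq₀
    (fun x hx => zero_le_one.trans ((hmem x).mp hx))
    ((hH.convexOn_dualNorm_sub_div xbar hr.le).convexOnSet _)
  have hnot : ∀ β, q < β → β ≤ 1 →
      ¬ AlphaConcaveOn (wulff H xbar r)ᶜ (fun x => g x ^ (1 / q)) β :=
    fun β hβ _ => not_alphaConcaveOn_rpow_one_div hq₀ hβ h₁ h₃ h₂ hg₁ hg₃ hg₂
  exact ⟨hconc, hnot, concavityExponent_eq (by linarith) hconc hnot⟩
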